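/- Let D be an H-colored digraph and 𝔉 an H-class partition of A(D) such that D⟨F⟩ is strongly connected for every F∈𝔉. Then for every k≥2 and every l≥k+1, D has a (k,l,H)-kernel by walks. -/
import Mathlib


universe u v

/-- A walk of length `n` in the digraph with arc relation `R`;
its vertices are `x 0, x 1, …, x n`. -/
def IsWalk {α : Type u} (R : α → α → Prop) (x : ℕ → α) (n : ℕ) : Prop :=
  ∀ i < n, R (x i) (x (i + 1))

/-- A (directed) path: a walk whose vertices `x 0, …, x n` are pairwise distinct. -/
def IsPath {α : Type u} (R : α → α → Prop) (x : ℕ → α) (n : ℕ) : Prop :=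
  IsWalk R x n ∧ ∀ i ≤ n, ∀ j ≤ n, x i = x j → i = j

/-- There is a directed path from `u` to `v` in the digraph with arc relation `R`. -/
def ExistsPath {α : Type u} (R : α → α → Prop) (u v : α) : Prop :=
  ∃ x n, IsPath R x n ∧ x 0 = u ∧ x n = v

/-- A cycle of length `n` in the digraph with arc relation `R`. -/
def IsCycle {α : Type u} (R : α → α → Prop) (x : ℕ → α) (n : ℕ) : Prop :=
  1 ≤ n ∧ IsWalk R x n ∧ x n = x 0 ∧ ∀ i < n, ∀ j < n, x i = x j → i = j

/-- The digraph with vertex set `Vs` and arc relation `R` is strongly connected: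
any two vertices are joined by directed paths in both directions. -/
def StronglyConnectedOn {α : Type u} (R : α → α → Prop) (Vs : Set α) : Prop :=
  ∀ u ∈ Vs, ∀ v ∈ Vs, ExistsPath R u v

/-- The digraph with vertex set `Vs` and arc relation `R` is unilateral:
any two vertices are joined by a directed path in at least one direction. -/
def UnilateralOn {α : Type u} (R : α → α → Prop) (Vs : Set α) : Prop :=
  ∀ u ∈ Vs, ∀ v ∈ Vs, ExistsPath R u v ∨ ExistsPath R v u

/-- A kernel by paths of the digraph with vertex set `Vs` and arc relation `R`:
no directed path joins two distinct vertices of `K`, and every vertex of `Vs`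
not in `K` has a directed path to a vertex of `K`. -/
def KernelByPaths {α : Type u} (R : α → α → Prop) (Vs : Set α) (K : Set α) : Prop :=
  K ⊆ Vs ∧
  (∀ u ∈ K, ∀ v ∈ K, u ≠ v → ¬ ExistsPath R u v) ∧
  (∀ u ∈ Vs, u ∉ K → ∃ v ∈ K, ExistsPath R u v)

/-- A `(k,l)`-kernel of the digraph with vertex set `Vs` and arc relation `R`:
every walk between two distinct vertices of `S` has length at least `k`, and
every vertex not in `S` has a walk of length at most `l` to a vertex of `S`. -/
def klKernel {α : Type u} (R : α → α → Prop) (Vs : Set α) (k l : ℕ) (S : Set α) : Prop :=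
  S ⊆ Vs ∧
  (∀ u ∈ S, ∀ v ∈ S, u ≠ v → ∀ x n, IsWalk R x n → x 0 = u → x n = v → k ≤ n) ∧
  (∀ u ∈ Vs, u ∉ S → ∃ v ∈ S, ∃ x n, IsWalk R x n ∧ x 0 = u ∧ x n = v ∧ n ≤ l)

/-- An independent set of the digraph with vertex set `Vs` and arc relation `R`:
there is no arc between two distinct vertices of `S`. -/
def IndependentOn {α : Type u} (R : α → α → Prop) (Vs : Set α) (S : Set α) : Prop :=
  S ⊆ Vs ∧ ∀ u ∈ S, ∀ v ∈ S, u ≠ v → ¬ R u v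

/-- An `l`-absorbent set of the digraph with vertex set `Vs` and arc relation `R`. -/
def lAbsorbentOn {α : Type u} (R : α → α → Prop) (Vs : Set α) (l : ℕ) (S : Set α) : Prop :=
  ∀ u ∈ Vs, u ∉ S → ∃ v ∈ S, ∃ x n, IsWalk R x n ∧ x 0 = u ∧ x n = v ∧ n ≤ l

section HColored

variable {V : Type u} {C : Type v}

/-- The arc relation of the subdigraph arc-induced by a set `F` of arcs. -/
def memRel (F : Set (V × V)) : V → V → Prop := fun a b => (a, b) ∈ F

/-- The vertex set of the subdigraph `D⟨F⟩` arc-induced by a set `F` of arcs. -/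
def classVerts (F : Set (V × V)) : Set V := {a | ∃ b, (a, b) ∈ F ∨ (b, a) ∈ F}

/-- The set of obstruction indices of the open walk `x 0, …, x n` in the
`H`-colored digraph with coloring `ρ`, where `HA` is the arc relation of `H`. -/
def obstructions (HA : C → C → Prop) (ρ : V → V → C) (x : ℕ → V) (n : ℕ) : Set ℕ :=
  {i | 1 ≤ i ∧ i < n ∧ ¬ HA (ρ (x (i - 1)) (x i)) (ρ (x i) (x (i + 1)))}

/-- The `H`-length of the open walk `x 0, …, x n`: the number of obstructions plus one. -/
noncomputable def hLength (HA : C → C → Prop) (ρ : V → V → C) (x : ℕ → V) (n : ℕ) : ℕ :=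
  (obstructions HA ρ x n).ncard + 1

/-- `S` is `(k,H)`-independent by walks: every walk between two distinct
vertices of `S` has `H`-length at least `k`. -/
def kHIndependentByWalks (DA : V → V → Prop) (HA : C → C → Prop) (ρ : V → V → C)
    (k : ℕ) (S : Set V) : Prop :=
  ∀ u ∈ S, ∀ v ∈ S, u ≠ v →
    ∀ x n, IsWalk DA x n → x 0 = u → x n = v → k ≤ hLength HA ρ x n

/-- `S` is `(l,H)`-absorbent by walks: every vertex not in `S` has a walk to a
vertex of `S` of `H`-length at most `l`. -/
def lHAbsorbentByWalks (DA : V → V → Prop) (HA : C → C → Prop) (ρ : V → V → C)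
    (l : ℕ) (S : Set V) : Prop :=
  ∀ u, u ∉ S → ∃ v ∈ S, ∃ x n, IsWalk DA x n ∧ x 0 = u ∧ x n = v ∧ hLength HA ρ x n ≤ l

/-- A `(k,l,H)`-kernel by walks. -/
def klHKernelByWalks (DA : V → V → Prop) (HA : C → C → Prop) (ρ : V → V → C)
    (k l : ℕ) (S : Set V) : Prop :=
  kHIndependentByWalks DA HA ρ k S ∧ lHAbsorbentByWalks DA HA ρ l S

/-- `𝔉` is an `H`-class partition of the arc set of `D`: it is a partition of the
arc set, and two consecutive arcs form an `H`-arc of colors iff they lie in a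
common class. -/
def IsHClassPartition (DA : V → V → Prop) (HA : C → C → Prop) (ρ : V → V → C)
    (𝔉 : Set (Set (V × V))) : Prop :=
  (∀ F ∈ 𝔉, F.Nonempty ∧ ∀ p ∈ F, DA p.1 p.2) ∧
  (∀ u v : V, DA u v → ∃! F, F ∈ 𝔉 ∧ (u, v) ∈ F) ∧
  (∀ u v w : V, DA u v → DA v w →
    (HA (ρ u v) (ρ v w) ↔ ∃ F ∈ 𝔉, (u, v) ∈ F ∧ (v, w) ∈ F))

/-- There exist arcs `(u,v) ∈ F` and `(v,w) ∈ G`. -/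
def classArc (F G : Set (V × V)) : Prop := ∃ u v w : V, (u, v) ∈ F ∧ (v, w) ∈ G

/-- The arc relation of the `H`-class digraph `C_𝔉(D)` (whose vertex set is `𝔉`). -/
def CRel (𝔉 : Set (Set (V × V))) : Set (V × V) → Set (V × V) → Prop :=
  fun F G => F ∈ 𝔉 ∧ G ∈ 𝔉 ∧ classArc F G

/-- `𝔉` is walk-preservative: for every arc `(F,G)` of `C_𝔉(D)` and every vertex
`z` of `D⟨F⟩` there is a directed path in `D⟨F⟩` from `z` to some vertex of `D⟨G⟩`. -/
def WalkPreservative (𝔉 : Set (Set (V × V))) : Prop :=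
  ∀ F ∈ 𝔉, ∀ G ∈ 𝔉, classArc F G → ∀ z ∈ classVerts F,
    ∃ w ∈ classVerts G, ExistsPath (memRel F) z w

/-- `N⁺(𝒮)`: the classes outside `𝒮` receiving an arc of `C_𝔉(D)` from `𝒮`. -/
def outNbhd (𝔉 𝒮 : Set (Set (V × V))) : Set (Set (V × V)) :=
  {G | G ∈ 𝔉 ∧ G ∉ 𝒮 ∧ ∃ F ∈ 𝒮, classArc F G}

/-- `N⁻_𝔉(x)`: the classes containing an arc entering `x`. -/
def inClasses (𝔉 : Set (Set (V × V))) (x : V) : Set (Set (V × V)) :=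
  {F | F ∈ 𝔉 ∧ ∃ u, (u, x) ∈ F}

/-- `N⁺_𝔉(x)`: the classes containing an arc leaving `x`. -/
def outClasses (𝔉 : Set (Set (V × V))) (x : V) : Set (Set (V × V)) :=
  {F | F ∈ 𝔉 ∧ ∃ v, (x, v) ∈ F}

/-- `N_𝔉(x) = N⁻_𝔉(x) ∪ N⁺_𝔉(x)`. -/
def nbhdClasses (𝔉 : Set (Set (V × V))) (x : V) : Set (Set (V × V)) :=
  inClasses 𝔉 x ∪ outClasses 𝔉 x

/-- `x` is obstruction-free in `D`: every arc entering `x` followed by every arc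
leaving `x` is an `H`-arc of colors. -/
def ObstructionFree (DA : V → V → Prop) (HA : C → C → Prop) (ρ : V → V → C) (x : V) : Prop :=
  ∀ u w, DA u x → DA x w → HA (ρ u x) (ρ x w)

/-- `C_𝔉(D)` has no sinks: every class has an out-arc to a different class. -/
def CNoSinks (𝔉 : Set (Set (V × V))) : Prop :=
  ∀ F ∈ 𝔉, ∃ G ∈ 𝔉, G ≠ F ∧ classArc F G

/-- The (loopless) subdigraph `D⟨F⟩` has no sinks. -/
def NoSinksIn (F : Set (V × V)) : Prop :=
  ∀ x ∈ classVerts F, ∃ y, (x, y) ∈ F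

end HColored


section AuxProof
variable {V : Type u} {C : Type v}

/-- Two vertices share a class: both are vertices of `D⟨F⟩` for some `F ∈ 𝔉`. -/
def Step (𝔉 : Set (Set (V × V))) (u v : V) : Prop :=
  ∃ F ∈ 𝔉, u ∈ classVerts F ∧ v ∈ classVerts F

lemma obstructions_finite (HA : C → C → Prop) (ρ : V → V → C) (x : ℕ → V) (n : ℕ) :
    (obstructions HA ρ x n).Finite :=
  (Set.finite_Iio n).subset fun _ hi => hi.2.1

lemma one_le_hLength (HA : C → C → Prop) (ρ : V → V → C) (x : ℕ → V) (n : ℕ) :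
    1 ≤ hLength HA ρ x n := Nat.le_add_left 1 _

lemma concat_walk (DA : V → V → Prop) (HA : C → C → Prop) (ρ : V → V → C)
    {x y : ℕ → V} {n m : ℕ} (hx : IsWalk DA x n) (hy : IsWalk DA y m) (hxy : x n = y 0) :
    ∃ z, IsWalk DA z (n + m) ∧ z 0 = x 0 ∧ z (n + m) = y m ∧
      hLength HA ρ z (n + m) ≤ hLength HA ρ x n + hLength HA ρ y m := by
  set z : ℕ → V := fun i => if i ≤ n then x i else y (i - n) with hzdef
  have zx : ∀ i, i ≤ n → z i = x i := fun i hi => if_pos hi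
  have zy : ∀ i, n ≤ i → z i = y (i - n) := by
    intro i hi
    rcases Nat.lt_or_ge n i with h | h
    · exact if_neg (by omega)
    · have : i = n := by omega
      subst this
      simp [hzdef, hxy]
  have hwz : IsWalk DA z (n + m) := by
    intro i hi
    rcases Nat.lt_or_ge i n with h | h
    · rw [zx i (by omega), zx (i+1) (by omega)]; exact hx i h
    · rw [zy i h, zy (i+1) (by omega)]
      have e : i + 1 - n = (i - n) + 1 := by omega
      rw [e]; exact hy (i - n) (by omega)
  refine ⟨z, hwz, zx 0 (Nat.zero_le _), ?_, ?_⟩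
  · rw [zy (n + m) (by omega)]; congr 1; omega
  · have hsub : obstructions HA ρ z (n + m) ⊆
        obstructions HA ρ x n ∪ {n} ∪ (fun i => i + n) '' obstructions HA ρ y m := by
      rintro i ⟨h1, h2, h3⟩
      rcases lt_trichotomy i n with h | h | h
      · left; left
        refine ⟨h1, h, ?_⟩
        rwa [zx (i-1) (by omega), zx i (by omega), zx (i+1) (by omega)] at h3
      · left; right; exact h
      · right
        refine ⟨i - n, ⟨by omega, by omega, ?_⟩, show i - n + n = i by omega⟩
        have e1 : z (i - 1) = y (i - n - 1) := by
          rw [zy (i-1) (by omega)]; congr 1; omega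
        have e2 : z i = y (i - n) := zy i (by omega)
        have e3 : z (i + 1) = y (i - n + 1) := by
          rw [zy (i+1) (by omega)]; congr 1; omega
        rw [e1, e2, e3] at h3
        exact h3
    have hfx := obstructions_finite HA ρ x n
    have hfy := obstructions_finite HA ρ y m
    have hfin : (obstructions HA ρ x n ∪ {n} ∪
        (fun i => i + n) '' obstructions HA ρ y m).Finite :=
      ((hfx.union (Set.finite_singleton n)).union (hfy.image _))
    have h1 := Set.ncard_le_ncard hsub hfin
    have h2 := Set.ncard_union_le (obstructions HA ρ x n ∪ {n})
      ((fun i => i + n) '' obstructions HA ρ y m)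
    have h3 := Set.ncard_union_le (obstructions HA ρ x n) ({n} : Set ℕ)
    have h4 : ((fun i => i + n) '' obstructions HA ρ y m).ncard =
        (obstructions HA ρ y m).ncard :=
      Set.ncard_image_of_injective _ (add_left_injective n)
    have h5 : ({n} : Set ℕ).ncard = 1 := Set.ncard_singleton n
    simp only [hLength]
    omega

lemma step_walk (DA : V → V → Prop) (HA : C → C → Prop) (ρ : V → V → C)
    {𝔉 : Set (Set (V × V))} (hpart : IsHClassPartition DA HA ρ 𝔉)
    (hstrong : ∀ F ∈ 𝔉, StronglyConnectedOn (memRel F) (classVerts F))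
    {u v : V} (h : Step 𝔉 u v) :
    ∃ x n, IsWalk DA x n ∧ x 0 = u ∧ x n = v ∧ hLength HA ρ x n ≤ 1 := by
  obtain ⟨F, hF, hu, hv⟩ := h
  obtain ⟨x, n, ⟨hw, _⟩, hx0, hxn⟩ := hstrong F hF u hu v hv
  have harc : ∀ i, i < n → (x i, x (i+1)) ∈ F := fun i hi => hw i hi
  have hda : ∀ i, i < n → DA (x i) (x (i+1)) :=
    fun i hi => (hpart.1 F hF).2 _ (harc i hi)
  refine ⟨x, n, hda, hx0, hxn, ?_⟩
  have hempty : obstructions HA ρ x n = ∅ := by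
    ext i
    simp only [obstructions, Set.mem_setOf_eq, Set.mem_empty_iff_false, iff_false, not_and]
    intro h1 h2 h3
    apply h3
    have a1 : (x (i-1), x i) ∈ F := by
      have := harc (i-1) (by omega)
      rwa [Nat.sub_add_cancel h1] at this
    have a2 : (x i, x (i+1)) ∈ F := harc i h2
    exact (hpart.2.2 (x (i-1)) (x i) (x (i+1))
      ((hpart.1 F hF).2 _ a1) ((hpart.1 F hF).2 _ a2)).mpr ⟨F, hF, a1, a2⟩
  simp [hLength, hempty]

lemma chain_walk (DA : V → V → Prop) (HA : C → C → Prop) (ρ : V → V → C)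
    {𝔉 : Set (Set (V × V))} (hpart : IsHClassPartition DA HA ρ 𝔉)
    (hstrong : ∀ F ∈ 𝔉, StronglyConnectedOn (memRel F) (classVerts F)) :
    ∀ j, 1 ≤ j → ∀ z : ℕ → V, (∀ i < j, Step 𝔉 (z i) (z (i + 1))) →
    ∃ x n, IsWalk DA x n ∧ x 0 = z 0 ∧ x n = z j ∧ hLength HA ρ x n ≤ j := by
  intro j
  induction j with
  | zero => omega
  | succ j ih =>
    intro _ z hz
    by_cases hj : j = 0
    · subst hj
      exact step_walk DA HA ρ hpart hstrong (hz 0 (by omega))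
    · obtain ⟨x, n, hw, h0, hn, hl⟩ := ih (by omega) z (fun i hi => hz i (by omega))
      obtain ⟨y, m, hwy, hy0, hym, hly⟩ :=
        step_walk DA HA ρ hpart hstrong (hz j (by omega))
      obtain ⟨w, hww, hw0, hwend, hwl⟩ :=
        concat_walk DA HA ρ hw hwy (by rw [hn, hy0])
      exact ⟨w, n + m, hww, by rw [hw0, h0], by rw [hwend, hym], by omega⟩

lemma walk_chain (DA : V → V → Prop) (HA : C → C → Prop) (ρ : V → V → C)
    {𝔉 : Set (Set (V × V))} (hpart : IsHClassPartition DA HA ρ 𝔉) :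
    ∀ n, 1 ≤ n → ∀ x : ℕ → V, IsWalk DA x n →
    ∃ F ∈ 𝔉, (x (n - 1), x n) ∈ F ∧
      ∃ (z : ℕ → V) (j : ℕ), 1 ≤ j ∧ j ≤ hLength HA ρ x n ∧ (∀ i < j, Step 𝔉 (z i) (z (i + 1))) ∧
        z 0 = x 0 ∧ z j = x n ∧ z (j - 1) ∈ classVerts F := by
  intro n
  induction n with
  | zero => omega
  | succ n ih =>
    intro _ x hx
    by_cases hn : n = 0
    · subst hn
      obtain ⟨F, ⟨hF, harc⟩, _⟩ := hpart.2.1 (x 0) (x 1) (hx 0 Nat.one_pos)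
      exact ⟨F, hF, harc, x, 1, le_refl 1, one_le_hLength HA ρ x 1,
        fun i hi => by
          interval_cases i
          exact ⟨F, hF, ⟨x 1, Or.inl harc⟩, ⟨x 0, Or.inr harc⟩⟩,
        rfl, rfl, ⟨x 1, Or.inl harc⟩⟩
    · have hx' : IsWalk DA x n := fun i hi => hx i (by omega)
      obtain ⟨F, hF, harc, z, j, hj1, hjle, hsteps, hz0, hzj, hzl⟩ := ih (by omega) x hx'
      have darc2 : DA (x n) (x (n + 1)) := hx n (by omega)
      have hsub : obstructions HA ρ x n ⊆ obstructions HA ρ x (n + 1) := by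
        rintro i ⟨a, b, c⟩; exact ⟨a, by omega, c⟩
      have hmono : hLength HA ρ x n ≤ hLength HA ρ x (n + 1) :=
        Nat.add_le_add_right
          (Set.ncard_le_ncard hsub (obstructions_finite HA ρ x (n+1))) 1
      by_cases hHA : HA (ρ (x (n - 1)) (x n)) (ρ (x n) (x (n + 1)))
      · -- no new obstruction: next arc stays in class F
        have darc1 : DA (x (n-1)) (x n) := (hpart.1 F hF).2 _ harc
        obtain ⟨F', hF', b1, b2⟩ := (hpart.2.2 _ _ _ darc1 darc2).mp hHA
        obtain ⟨G, _, hGu⟩ := hpart.2.1 (x (n-1)) (x n) darc1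
        have hFF : F' = F := (hGu F' ⟨hF', b1⟩).trans (hGu F ⟨hF, harc⟩).symm
        have b2' : (x n, x (n + 1)) ∈ F := hFF ▸ b2
        refine ⟨F, hF, b2', fun i => if i = j then x (n + 1) else z i, j, hj1,
          le_trans hjle hmono, ?_, ?_, ?_, ?_⟩
        · intro i hi
          have hij : i ≠ j := by omega
          show Step 𝔉 (if i = j then x (n + 1) else z i)
            (if i + 1 = j then x (n + 1) else z (i + 1))
          rw [if_neg hij]
          by_cases h2 : i + 1 = j
          · rw [if_pos h2]
            have e : i = j - 1 := by omega
            rw [e]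
            exact ⟨F, hF, hzl, ⟨x n, Or.inr b2'⟩⟩
          · rw [if_neg h2]; exact hsteps i hi
        · show (if (0 : ℕ) = j then x (n + 1) else z 0) = x 0
          rw [if_neg (show (0 : ℕ) ≠ j by omega)]; exact hz0
        · show (if j = j then x (n + 1) else z j) = x (n + 1)
          rw [if_pos rfl]
        · show (if j - 1 = j then x (n + 1) else z (j - 1)) ∈ classVerts F
          rw [if_neg (show j - 1 ≠ j by omega)]; exact hzl
      · -- new obstruction at n
        have hmem : n ∈ obstructions HA ρ x (n + 1) := ⟨by omega, by omega, hHA⟩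
        have hnot : n ∉ obstructions HA ρ x n := fun h => by
          have := h.2.1; omega
        have hins : insert n (obstructions HA ρ x n) ⊆ obstructions HA ρ x (n + 1) := by
          rintro i (rfl | hi)
          · exact hmem
          · exact hsub hi
        have hcard : hLength HA ρ x n + 1 ≤ hLength HA ρ x (n + 1) := by
          have h1 := Set.ncard_le_ncard hins (obstructions_finite HA ρ x (n+1))
          rw [Set.ncard_insert_of_notMem hnot (obstructions_finite HA ρ x n)] at h1
          simp only [hLength]; omega
        obtain ⟨G, ⟨hG, harcG⟩, _⟩ := hpart.2.1 (x n) (x (n+1)) darc2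
        refine ⟨G, hG, harcG, fun i => if i = j + 1 then x (n + 1) else z i, j + 1,
          by omega, by omega, ?_, ?_, ?_, ?_⟩
        · intro i hi
          have hij : i ≠ j + 1 := by omega
          show Step 𝔉 (if i = j + 1 then x (n + 1) else z i)
            (if i + 1 = j + 1 then x (n + 1) else z (i + 1))
          rw [if_neg hij]
          by_cases h2 : i = j
          · subst h2
            rw [if_pos rfl, hzj]
            exact ⟨G, hG, ⟨x (n+1), Or.inl harcG⟩, ⟨x n, Or.inr harcG⟩⟩
          · rw [if_neg (show i + 1 ≠ j + 1 by omega)]; exact hsteps i (by omega)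
        · show (if (0 : ℕ) = j + 1 then x (n + 1) else z 0) = x 0
          rw [if_neg (show (0 : ℕ) ≠ j + 1 by omega)]; exact hz0
        · show (if j + 1 = j + 1 then x (n + 1) else z (j + 1)) = x (n + 1)
          rw [if_pos rfl]
        · show (if j + 1 - 1 = j + 1 then x (n + 1) else z (j + 1 - 1)) ∈ classVerts G
          rw [if_neg (show j + 1 - 1 ≠ j + 1 by omega), show j + 1 - 1 = j from rfl, hzj]
          exact ⟨x (n+1), Or.inl harcG⟩

end AuxProof

/-- Theorem `Teostrong`. Let `D` be an `H`-colored digraph and `𝔉` an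
`H`-class partition of `A(D)` such that `D⟨F⟩` is strongly connected for every `F ∈ 𝔉`.
Then, for every `k ≥ 2` and every `l ≥ k+1`, `D` has a `(k,l,H)`-kernel by walks. -/
theorem stmt2 {V : Type u} {C : Type v}
    (DA : V → V → Prop) (hloopless : ∀ a : V, ¬ DA a a)
    (HA : C → C → Prop) (ρ : V → V → C)
    (𝔉 : Set (Set (V × V)))
    (hpart : IsHClassPartition DA HA ρ 𝔉)
    (hstrong : ∀ F ∈ 𝔉, StronglyConnectedOn (memRel F) (classVerts F)) :
    ∀ k l : ℕ, 2 ≤ k → k + 1 ≤ l → ∃ S : Set V, klHKernelByWalks DA HA ρ k l S := by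
  intro k l hk hl
  set P : Set V → Prop := fun S => ∀ u ∈ S, ∀ v ∈ S, u ≠ v →
    ∀ x n, IsWalk DA x n → x 0 = u → x n = v → k ≤ hLength HA ρ x n with hP
  have hub : ∀ c ⊆ {S | P S}, IsChain (· ⊆ ·) c → ∃ ub ∈ {S | P S}, ∀ s ∈ c, s ⊆ ub := by
    intro c hc hchain
    rcases Set.eq_empty_or_nonempty c with rfl | hne
    · refine ⟨∅, ?_, ?_⟩
      · intro u hu; exact absurd hu (Set.notMem_empty u)
      · intro s hs; exact absurd hs (Set.notMem_empty s)
    · refine ⟨⋃₀ c, ?_, fun s hs => Set.subset_sUnion_of_mem hs⟩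
      intro u hu v hv hne' x n hw h0 hn
      obtain ⟨s, hs, hus⟩ := hu
      obtain ⟨t, ht, hvt⟩ := hv
      rcases eq_or_ne s t with rfl | hst
      · exact hc hs u hus v hvt hne' x n hw h0 hn
      · rcases hchain hs ht hst with h | h
        · exact hc ht u (h hus) v hvt hne' x n hw h0 hn
        · exact hc hs u hus v (h hvt) hne' x n hw h0 hn
  obtain ⟨S, hS⟩ := zorn_subset {S | P S} hub
  refine ⟨S, hS.prop, ?_⟩
  intro u huS
  have hnp : ¬ P (S ∪ {u}) := by
    intro h
    exact huS (hS.2 h Set.subset_union_left (Set.mem_union_right S rfl))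
  simp only [hP, not_forall] at hnp
  obtain ⟨a, ha, b, hb, hab, x, n, hw, h0, hn, hlen⟩ := hnp
  push_neg at hlen
  have hPS : P S := hS.prop
  rcases ha with haS | hau
  · rcases hb with hbS | hbu
    · exact absurd (hPS a haS b hbS hab x n hw h0 hn) (by omega)
    · -- b = u : walk from a ∈ S to u; reverse it
      have hbu' : b = u := hbu
      subst hbu'
      have hn1 : 1 ≤ n := by
        rcases Nat.eq_zero_or_pos n with rfl | h
        · exact absurd (h0 ▸ hn ▸ rfl : a = b) hab
        · exact h
      obtain ⟨F, hF, _, z, j, hj1, hjle, hsteps, hz0, hzj, _⟩ :=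
        walk_chain DA HA ρ hpart n hn1 x hw
      -- reverse the chain
      have hrev : ∀ i < j, Step 𝔉 ((fun i => z (j - i)) i) ((fun i => z (j - i)) (i + 1)) := by
        intro i hi
        obtain ⟨G, hG, hA, hB⟩ := hsteps (j - i - 1) (by omega)
        have e : j - i - 1 + 1 = j - i := by omega
        rw [e] at hB
        have e2 : j - (i + 1) = j - i - 1 := by omega
        simp only
        rw [e2]
        exact ⟨G, hG, hB, hA⟩
      obtain ⟨y, m, hwy, hy0, hym, hly⟩ :=
        chain_walk DA HA ρ hpart hstrong j hj1 _ hrev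
      refine ⟨a, haS, y, m, hwy, ?_, ?_, by omega⟩
      · rw [hy0]; simp only [Nat.sub_zero]; rw [hzj, hn]
      · rw [hym]; simp only [Nat.sub_self]; rw [hz0, h0]
  · have hau' : a = u := hau
    subst hau'
    rcases hb with hbS | hbu
    · exact ⟨b, hbS, x, n, hw, h0, hn, by omega⟩
    · exact absurd (hbu ▸ rfl : a = b) hab
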